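/- arXiv:math/0306148 — 2 statements merged into one kernel-verified Lean document; each statement's English description precedes it below -/
import Mathlib

section
/- Let R be a commutative ring, let L and W be ideals of R, let M be an ideal of R, and let x ∈ M. Assume L : x² = L : x and xW = (0). Then for every integer n ≥ 2, (L + (xⁿ) + W) : M = ((L + W) : M) + ((L + (xⁿ)) : M). -/
open Ideal IsLocalRing

/-- A sequence `x₁, …, x_s` is a `d`-sequence. -/
def IsDSeq {R : Type*} [CommRing R] {s : ℕ} (x : Fin s → R) : Prop :=
  ∀ i j : Fin s, i ≤ j →
    (Ideal.span (x '' {k | k < i})).colon (Ideal.span {x i}) =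
    (Ideal.span (x '' {k | k < i})).colon (Ideal.span {x i * x j})

/-- A strong `d`-sequence: all power sequences are `d`-sequences. -/
def IsStrongDSeq {R : Type*} [CommRing R] {s : ℕ} (x : Fin s → R) : Prop :=
  ∀ n : Fin s → ℕ, (∀ i, 1 ≤ n i) → IsDSeq (fun i => x i ^ n i)

/-- `x₁, …, x_d` is a system of parameters of the local ring `A`. -/
def IsSOP {A : Type*} [CommRing A] [IsLocalRing A] {d : ℕ} (x : Fin d → A) : Prop :=
  ringKrullDim A = d ∧ (Ideal.span (Set.range x)).radical = maximalIdeal A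

/-- `Q` is a parameter ideal: generated by a system of parameters. -/
def IsParameterIdeal (A : Type*) [CommRing A] [IsLocalRing A] (Q : Ideal A) : Prop :=
  ∃ (d : ℕ) (x : Fin d → A), IsSOP x ∧ Q = Ideal.span (Set.range x)

/-- A Buchsbaum local ring: every system of parameters is a weak `A`-sequence. -/
def IsBuchsbaum (A : Type*) [CommRing A] [IsLocalRing A] : Prop :=
  ∀ (d : ℕ) (x : Fin d → A), IsSOP x →
    ∀ i : Fin d,
      (Ideal.span (x '' {k | k < i})).colon (Ideal.span {x i}) =
      (Ideal.span (x '' {k | k < i})).colon (maximalIdeal A)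

/-- The 0-th local cohomology `H⁰_𝔪(A)`, as the ideal of elements killed by a power of `𝔪`. -/
noncomputable def H0 (A : Type*) [CommRing A] [IsLocalRing A] : Ideal A :=
  ⨆ n : ℕ, (⊥ : Ideal A).colon ((maximalIdeal A) ^ n : Ideal A)

/-- The length of a module, as the Krull dimension of its submodule lattice (valued in `ℕ∞`). -/
noncomputable def moduleLength (R M : Type*) [Ring R] [AddCommGroup M] [Module R M] : ℕ∞ :=
  WithBot.unbotD 0 (Order.krullDim (Submodule R M))

/-- `ℓ_A(I/Q)`: the length of `I/Q`. -/
noncomputable def quotLength {A : Type*} [CommRing A] (Q I : Ideal A) : ℕ∞ :=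
  moduleLength (A ⧸ Q) (I.map (Ideal.Quotient.mk Q))

/-- `r(A)`: the supremum of the indices of reducibility of parameter ideals. -/
noncomputable def typeR (A : Type*) [CommRing A] [IsLocalRing A] : ℕ∞ :=
  ⨆ Q ∈ {Q : Ideal A | IsParameterIdeal A Q}, quotLength Q (Q.colon (maximalIdeal A))

/-- The reduction number `r_Q(I) = min{n ≥ 0 ∣ I^{n+1} = Q Iⁿ}`. -/
noncomputable def reductionNumber {A : Type*} [CommRing A] (Q I : Ideal A) : ℕ :=
  sInf {n : ℕ | I ^ (n + 1) = Q * I ^ n}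

/-- `x` is integral over the ideal `Q`. -/
def IsIntegralOverIdeal {A : Type*} [CommRing A] (Q : Ideal A) (x : A) : Prop :=
  ∃ n : ℕ, 0 < n ∧ ∃ c : ℕ → A, (∀ i ∈ Finset.Icc 1 n, c i ∈ Q ^ i) ∧
    x ^ n + ∑ i ∈ Finset.Icc 1 n, c i * x ^ (n - i) = 0

/-- `A` has Hilbert–Samuel multiplicity `e` (with respect to its maximal ideal). -/
def HasHSMultiplicity (A : Type*) [CommRing A] [IsLocalRing A] (e : ℕ) : Prop :=
  ∃ d : ℕ, ringKrullDim A = d ∧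
    Filter.Tendsto
      (fun n : ℕ =>
        ((d.factorial : ℝ) * ((moduleLength A (A ⧸ (maximalIdeal A) ^ n)).toNat : ℝ)) / (n : ℝ) ^ d)
      Filter.atTop (nhds (e : ℝ))

/-- The local ring `A` has depth `n`. -/
def HasDepth (A : Type*) [CommRing A] [IsLocalRing A] (n : ℕ) : Prop :=
  (∃ rs : List A, rs.length = n ∧ (∀ a ∈ rs, a ∈ maximalIdeal A) ∧
      RingTheory.Sequence.IsRegular A rs) ∧
    ∀ rs : List A, (∀ a ∈ rs, a ∈ maximalIdeal A) → RingTheory.Sequence.IsRegular A rs →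
      rs.length ≤ n

/-!
Let `a ∈ (L + (xⁿ) + W) : M` and write `a x ≡ b xⁿ` modulo `L + W`; the decomposition is
`a = (a - b xⁿ⁻¹) + b xⁿ⁻¹`. For `m ∈ M` write `a m ≡ c xⁿ` modulo `L + W`. Since `x W = 0`,
multiplying the first congruence by `x m` and the second by `x²` yields `(c x - b m) xⁿ⁺¹ ∈ L`, and
`L : x² = L : x` (hence `L : xʲ = L : x`) lowers this to `b m xⁿ⁻¹ ≡ c xⁿ` modulo `L`. This puts
`b xⁿ⁻¹` in `(L + (xⁿ)) : M` and `a - b xⁿ⁻¹` in `(L + W) : M`.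
-/

namespace Ideal

variable {R : Type*} [CommRing R] {L W : Ideal R} {x : R}

theorem mul_pow_succ_mem_iff (hcolon : L.colon (span {x ^ 2}) = L.colon (span {x})) (a : R)
    (j : ℕ) : a * x ^ (j + 1) ∈ L ↔ a * x ∈ L := by
  induction j with
  | zero => rw [zero_add, pow_one]
  | succ j ih =>
    have hsq := congrArg (a * x ^ j ∈ ·) hcolon
    simp only [mem_colon_span_singleton, eq_iff_iff] at hsq
    rw [← ih]
    convert hsq using 2 <;> ring

theorem mem_sup_span_singleton_sup_iff {I J : Ideal R} {y z : R} :
    z ∈ I ⊔ span {y} ⊔ J ↔ ∃ c, z - c * y ∈ I ⊔ J := by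
  rw [sup_right_comm, sup_comm, mem_span_singleton_sup]
  exact exists_congr fun c ↦ ⟨fun ⟨w, hw, hz⟩ ↦ by rwa [← hz, add_sub_cancel_left],
    fun hz ↦ ⟨_, hz, add_sub_cancel _ _⟩⟩

theorem mul_mem_of_mem_sup (hxW : ∀ w ∈ W, x * w = 0) {z : R} (hz : z ∈ L ⊔ W) : x * z ∈ L := by
  obtain ⟨l, hl, w, hw, rfl⟩ := Submodule.mem_sup.mp hz
  rw [mul_add, hxW w hw, add_zero]
  exact L.mul_mem_left x hl

theorem mul_pow_sub_mem_of_sub_mem_sup (hcolon : L.colon (span {x ^ 2}) = L.colon (span {x}))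
    (hxW : ∀ w ∈ W, x * w = 0) {a b c m : R} {k : ℕ}
    (hb : a * x - b * x ^ (k + 2) ∈ L ⊔ W) (hc : a * m - c * x ^ (k + 2) ∈ L ⊔ W) :
    b * m * x ^ (k + 1) - c * x ^ (k + 2) ∈ L := by
  have high : (c * x - b * m) * x ^ (k + 3) ∈ L := by
    convert sub_mem (L.mul_mem_left m (mul_mem_of_mem_sup hxW hb))
      (L.mul_mem_left x (mul_mem_of_mem_sup hxW hc)) using 1
    ring
  have low := (mul_pow_succ_mem_iff hcolon _ (k + 2)).mp high
  convert L.mul_mem_right (-x ^ k) low using 1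
  ring

theorem colon_sup_span_pow_sup_le {M : Ideal R}
    (hcolon : L.colon (span {x ^ 2}) = L.colon (span {x})) (hxW : ∀ w ∈ W, x * w = 0)
    (hx : x ∈ M) (k : ℕ) :
    (L ⊔ span {x ^ (k + 2)} ⊔ W).colon M ≤
      (L ⊔ W).colon M ⊔ (L ⊔ span {x ^ (k + 2)}).colon M := by
  intro a ha
  obtain ⟨b, hb⟩ := mem_sup_span_singleton_sup_iff.mp (Submodule.mem_colon.mp ha x hx)
  have key : ∀ m ∈ M, ∃ c,
      b * m * x ^ (k + 1) - c * x ^ (k + 2) ∈ L ∧ a * m - c * x ^ (k + 2) ∈ L ⊔ W := by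
    intro m hm
    obtain ⟨c, hc⟩ := mem_sup_span_singleton_sup_iff.mp (Submodule.mem_colon.mp ha m hm)
    exact ⟨c, mul_pow_sub_mem_of_sub_mem_sup hcolon hxW hb hc, hc⟩
  refine Submodule.mem_sup.mpr ⟨a - b * x ^ (k + 1), Submodule.mem_colon.mpr fun m hm ↦ ?_,
    b * x ^ (k + 1), Submodule.mem_colon.mpr fun m hm ↦ ?_, sub_add_cancel _ _⟩
  all_goals obtain ⟨c, hL, hLW⟩ := key m hm
  · convert sub_mem hLW (Submodule.mem_sup_left hL) using 1
    rw [smul_eq_mul]; ring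
  · convert add_mem (Submodule.mem_sup_left hL)
      (Submodule.mem_sup_right (mem_span_singleton'.mpr ⟨c, rfl⟩)) using 1
    rw [smul_eq_mul]; ring

end Ideal

theorem stmt0 {R : Type*} [CommRing R] (L W M : Ideal R) (x : R) (hx : x ∈ M)
    (hcolon : L.colon (Ideal.span {x ^ 2}) = L.colon (Ideal.span {x}))
    (hxW : ∀ w ∈ W, x * w = 0) (n : ℕ) (hn : 2 ≤ n) :
    (L + Ideal.span {x ^ n} + W).colon M =
      (L + W).colon M + (L + Ideal.span {x ^ n}).colon M := by
  obtain ⟨k, rfl⟩ := Nat.exists_eq_add_of_le' hn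
  simp only [Submodule.add_eq_sup]
  exact le_antisymm (Ideal.colon_sup_span_pow_sup_le hcolon hxW hx k)
    (sup_le (Submodule.colon_mono (sup_le_sup_right le_sup_left _) le_rfl)
      (Submodule.colon_mono le_sup_left le_rfl))
end

section
/- Let (A, 𝔪) be a one-dimensional Noetherian local ring and let Q = (a) be a parameter ideal (i.e., a is a system of parameters, so a is not in any minimal prime and Q is 𝔪-primary). Set I = Q : 𝔪. If Q = 𝔪·I, then the multiplicity e(A) of A equals 1. -/
/-!
Since `a` lies in `𝔪 I` but not in `𝔪 Q` (Nakayama), after rescaling by a unit `a = c f` with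
`c ∈ 𝔪` and `f ∈ I`. As `t f ∈ (c f)` for `t ∈ 𝔪`, we get `𝔪 ⊆ (c) + ann f`; since `a` kills
`ann f`, so does a power `𝔪ᵏ ⊆ Q`. Expanding powers then gives `𝔪ⁿ = (cⁿ)` for `n > k`, so every
`𝔪ⁿ/𝔪ⁿ⁺¹` is a nonzero cyclic module killed by `𝔪`, of length one. Hence `ℓ(A/𝔪ⁿ)` is `n` plus
a constant for large `n`, and `e(A) = 1`.
-/

open Ideal IsLocalRing

theorem moduleLength_eq_length (R M : Type*) [Ring R] [AddCommGroup M] [Module R M] :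
    moduleLength R M = Module.length R M := by
  rw [moduleLength, Module.length_eq_height, ← Order.height_top_eq_krullDim]
  rfl

open Filter Topology in
theorem tendsto_toNat_div_atTop_of_add_one {g : ℕ → ℕ∞} {N : ℕ} (hN : g N ≠ ⊤)
    (hg : ∀ n ≥ N, g (n + 1) = g n + 1) :
    Tendsto (fun n : ℕ => ((g n).toNat : ℝ) / n) atTop (𝓝 1) := by
  set L := (g N).toNat
  have hlin : ∀ n ≥ N, g n = ((L + (n - N) : ℕ) : ℕ∞) := by
    intro n hn
    induction n, hn using Nat.le_induction with
    | base => simpa [L] using (ENat.natCast_toNat hN).symm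
    | succ n hn ih =>
      rw [hg n hn, ih]
      norm_cast
      omega
  have hlim : Tendsto (fun n : ℕ => 1 + ((L : ℝ) - N) / n) atTop (𝓝 1) := by
    simpa using tendsto_const_nhds.add (tendsto_const_div_atTop_nhds_zero_nat ((L : ℝ) - N))
  refine hlim.congr' ?_
  filter_upwards [eventually_ge_atTop (N + 1)] with n hn
  have hn0 : (n : ℝ) ≠ 0 := Nat.cast_ne_zero.mpr (by omega)
  rw [hlin n (by omega), ENat.toNat_natCast]
  push_cast [Nat.cast_sub (show N ≤ n by omega)]
  field_simp
  ring

namespace Ideal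

variable {R : Type*} [CommRing R]

theorem pow_succ_le_pow_succ_sup_pow_mul {M J W : Ideal R} (hJ : J ≤ M) (h : M ≤ J ⊔ W) (n : ℕ) :
    M ^ (n + 1) ≤ J ^ (n + 1) ⊔ M ^ n * W := by
  induction n with
  | zero => simpa using h
  | succ n ih =>
    calc M ^ (n + 2) = M * M ^ (n + 1) := pow_succ' M (n + 1)
      _ ≤ (J ⊔ W) * M ^ (n + 1) := mul_mono_left h
      _ = J * M ^ (n + 1) ⊔ M ^ (n + 1) * W := by rw [sup_mul, mul_comm W]
      _ ≤ J * (J ^ (n + 1) ⊔ M ^ n * W) ⊔ M ^ (n + 1) * W :=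
        sup_le_sup_right (mul_mono_right ih) _
      _ ≤ J ^ (n + 2) ⊔ M ^ (n + 1) * W := by
        rw [mul_sup, ← pow_succ', ← mul_assoc]
        have hJM : J * M ^ n * W ≤ M ^ (n + 1) * W :=
          mul_mono_left (pow_succ' M n ▸ mul_mono_left hJ)
        exact sup_le (sup_le le_sup_left (hJM.trans le_sup_right)) le_sup_right

theorem le_span_singleton_sup_annihilator {M : Ideal R} {c f : R}
    (hf : ∀ t ∈ M, t * f ∈ span {c * f}) :
    M ≤ span {c} ⊔ (R ∙ f).annihilator := by
  intro t ht
  obtain ⟨s, hs⟩ := mem_span_singleton'.mp (hf t ht)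
  have hw : t - s * c ∈ (R ∙ f).annihilator := by
    rw [Submodule.mem_annihilator_span_singleton, smul_eq_mul, sub_mul, mul_assoc, hs, sub_self]
  rw [show t = s * c + (t - s * c) by ring]
  exact add_mem (mem_sup_left (mem_span_singleton'.mpr ⟨s, rfl⟩)) (mem_sup_right hw)

theorem pow_eq_span_singleton_pow_of_le_sup {M W : Ideal R} {c : R} (hc : c ∈ M)
    (h : M ≤ span {c} ⊔ W) {k : ℕ} (hW : M ^ k * W = ⊥) {n : ℕ} (hn : k < n) :
    M ^ n = span {c ^ n} := by
  obtain ⟨n, rfl⟩ : ∃ n', n = n' + 1 := ⟨n - 1, by omega⟩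
  refine le_antisymm ?_ (span_singleton_le_iff_mem _ |>.mpr (pow_mem_pow hc _))
  have hnW : M ^ n * W = ⊥ := eq_bot_iff.mpr (hW ▸ mul_mono_left (pow_le_pow_right (by omega)))
  simpa [hnW, span_singleton_pow] using
    pow_succ_le_pow_succ_sup_pow_mul (span_singleton_le_iff_mem _ |>.mpr hc) h n

end Ideal

theorem Submodule.length_quotient_eq_length_map_mkQ_add {R M : Type*} [Ring R] [AddCommGroup M]
    [Module R M] {N P : Submodule R M} (h : N ≤ P) :
    Module.length R (M ⧸ N) = Module.length R (P.map N.mkQ) + Module.length R (M ⧸ P) := by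
  rw [Module.length_eq_add_of_exact _ _ (P.map N.mkQ).injective_subtype
    (P.map N.mkQ).mkQ_surjective (LinearMap.exact_subtype_mkQ _),
    (quotientQuotientEquivQuotient N P h).length_eq]

theorem isSimpleModule_span_singleton_of_le_torsionOf {R M : Type*} [CommRing R]
    [AddCommGroup M] [Module R M] {p : Ideal R} [hp : p.IsMaximal] {x : M} (hx : x ≠ 0)
    (hpx : p ≤ Ideal.torsionOf R M x) : IsSimpleModule R (R ∙ x) := by
  have htors : Ideal.torsionOf R M x = p := by
    refine (hp.eq_of_le (fun h => hx ?_) hpx).symm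
    exact (one_smul R x).symm.trans ((Ideal.mem_torsionOf_iff x 1).mp (h ▸ Submodule.mem_top))
  have : IsSimpleModule R (R ⧸ p) := isSimpleModule_iff_isCoatom.mpr (Ideal.isMaximal_def.mp hp)
  exact IsSimpleModule.congr (htors ▸ Ideal.quotTorsionOfEquivSpanSingleton R M x).symm

theorem length_quotient_eq_length_quotient_span_add_one {R : Type*} [CommRing R] {p J : Ideal R}
    [p.IsMaximal] {x : R} (hJ : J ≤ Ideal.span {x}) (hx : x ∉ J) (hpx : ∀ r ∈ p, r * x ∈ J) :
    Module.length R (R ⧸ J) = Module.length R (R ⧸ Ideal.span {x}) + 1 := by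
  have hmap : Submodule.map J.mkQ (Ideal.span {x}) = R ∙ J.mkQ x := by
    rw [Ideal.span, Submodule.map_span, Set.image_singleton]
  have : IsSimpleModule R (R ∙ J.mkQ x) := by
    refine isSimpleModule_span_singleton_of_le_torsionOf (p := p) ?_ fun r hr => ?_
    · rwa [ne_eq, Submodule.mkQ_apply, Submodule.Quotient.mk_eq_zero]
    · rw [Ideal.mem_torsionOf_iff, ← map_smul, Submodule.mkQ_apply, Submodule.Quotient.mk_eq_zero]
      exact hpx r hr
  rw [Submodule.length_quotient_eq_length_map_mkQ_add hJ, hmap, Module.length_eq_one, add_comm]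

namespace IsLocalRing

variable {A : Type*} [CommRing A] [IsLocalRing A]

theorem eq_zero_of_mul_eq_self {x y : A} (hy : y ∈ maximalIdeal A) (h : y * x = x) : x = 0 :=
  (isUnit_one_sub_self_of_mem_nonunits y hy).mul_right_eq_zero.mp
    (by rw [sub_mul, one_mul, h, sub_self])

theorem exists_mul_eq_of_span_singleton_eq_maximalIdeal_mul {a : A} (ha : a ≠ 0) {I : Ideal A}
    (h : Ideal.span {a} = maximalIdeal A * I) : ∃ c ∈ maximalIdeal A, ∃ f ∈ I, c * f = a := by
  have ha' : a ∉ maximalIdeal A * Ideal.span {a} := fun hmem => by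
    obtain ⟨z, hz, hza⟩ := Ideal.mem_mul_span_singleton.mp hmem
    exact ha (eq_zero_of_mul_eq_self hz hza)
  obtain ⟨z, hz, y, hy, hzy⟩ :
      ∃ z ∈ maximalIdeal A, ∃ y ∈ I, z * y ∉ maximalIdeal A * Ideal.span {a} := by
    by_contra! hcon
    exact ha' (Ideal.mul_le.mpr hcon (h ▸ Ideal.mem_span_singleton_self a))
  obtain ⟨r, hr⟩ :=
    Ideal.mem_span_singleton'.mp (h ▸ Ideal.mul_mem_mul hz hy : z * y ∈ Ideal.span {a})
  have hu : IsUnit r := by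
    by_contra hr'
    exact hzy (hr ▸ Ideal.mul_mem_mul ((mem_maximalIdeal r).mpr hr')
      (Ideal.mem_span_singleton_self a))
  refine ⟨hu.unit⁻¹ * z, Ideal.mul_mem_left _ _ hz, y, hy, ?_⟩
  rw [mul_assoc, ← hr, ← mul_assoc, hu.val_inv_mul, one_mul]

theorem maximalIdeal_not_le_nilradical (hdim : 0 < ringKrullDim A) :
    ¬ maximalIdeal A ≤ nilradical A := fun hle => by
  have : (nilradical A).IsMaximal :=
    le_antisymm (nilradical_le_prime _) hle ▸ maximalIdeal.isMaximal A
  have := Ring.krullDimLE_iff.mp (Ring.KrullDimLE.of_isMaximal_nilradical A)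
  exact absurd hdim (not_lt.mpr (by exact_mod_cast this))

theorem maximalIdeal_pow_ne_bot (hdim : 0 < ringKrullDim A) (n : ℕ) : maximalIdeal A ^ n ≠ ⊥ :=
  fun h => maximalIdeal_not_le_nilradical hdim fun _ hx =>
    ⟨n, Ideal.mem_bot.mp (h ▸ Ideal.pow_mem_pow hx n)⟩

theorem length_quotient_maximalIdeal_pow_ne_top [IsNoetherianRing A] (n : ℕ) :
    Module.length A (A ⧸ maximalIdeal A ^ n) ≠ ⊤ := by
  rcases Nat.eq_zero_or_pos n with rfl | hn
  · simp
  have : IsArtinianRing (A ⧸ maximalIdeal A ^ n) := by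
    refine quotient_artinian_of_mem_minimalPrimes_of_isLocalRing _ ?_
    rw [← Ideal.radical_minimalPrimes (I := maximalIdeal A ^ n), Ideal.radical_pow _ hn.ne',
      (maximalIdeal.isMaximal A).isPrime.radical, Ideal.minimalPrimes_eq_subsingleton_self]
    rfl
  have : IsArtinian A (A ⧸ maximalIdeal A ^ n) :=
    isArtinian_of_surjective_algebraMap (Ideal.Quotient.mk_surjective (I := maximalIdeal A ^ n))
  exact Module.length_ne_top

theorem hasHSMultiplicity_one_of_maximalIdeal_pow_eq_span [IsNoetherianRing A]
    (hdim : ringKrullDim A = 1) {c : A} (hc : c ∈ maximalIdeal A) {N : ℕ}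
    (hN : ∀ n ≥ N, maximalIdeal A ^ n = Ideal.span {c ^ n}) : HasHSMultiplicity A 1 := by
  have hstep : ∀ n ≥ N, Module.length A (A ⧸ maximalIdeal A ^ (n + 1)) =
      Module.length A (A ⧸ maximalIdeal A ^ n) + 1 := by
    intro n hn
    rw [hN n hn]
    refine length_quotient_eq_length_quotient_span_add_one (p := maximalIdeal A) ?_ ?_ ?_
    · exact hN n hn ▸ Ideal.pow_le_pow_right n.le_succ
    · intro hmem
      obtain ⟨r, hr⟩ := Ideal.mem_span_singleton'.mp (hN (n + 1) (by omega) ▸ hmem)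
      have hcn : c ^ n = 0 := eq_zero_of_mul_eq_self (Ideal.mul_mem_left _ r hc)
        (by rw [mul_assoc, ← pow_succ', hr])
      exact maximalIdeal_pow_ne_bot (hdim ▸ zero_lt_one) n
        (by rw [hN n hn, hcn, Ideal.span_singleton_eq_bot])
    · intro r hr
      rw [pow_succ']
      exact Ideal.mul_mem_mul hr (hN n hn ▸ Ideal.mem_span_singleton_self _)
  refine ⟨1, by simp [hdim], ?_⟩
  simp only [Nat.factorial_one, Nat.cast_one, one_mul, pow_one, moduleLength_eq_length]
  exact tendsto_toNat_div_atTop_of_add_one (length_quotient_maximalIdeal_pow_ne_top N) hstep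

end IsLocalRing

theorem stmt5 {A : Type*} [CommRing A] [IsLocalRing A] [IsNoetherianRing A]
    (hdim : ringKrullDim A = 1) (a : A)
    (hQ : IsParameterIdeal A (Ideal.span {a}))
    (h : Ideal.span {a} = maximalIdeal A * ((Ideal.span {a}).colon (maximalIdeal A))) :
    HasHSMultiplicity A 1 := by
  obtain ⟨_, x, ⟨-, hrad⟩, hx⟩ := hQ
  rw [← hx] at hrad
  have ha : a ≠ 0 := by
    rintro rfl
    exact maximalIdeal_not_le_nilradical (hdim ▸ zero_lt_one) (by simp [← hrad, nilradical])
  obtain ⟨c, hc, f, hf, rfl⟩ := exists_mul_eq_of_span_singleton_eq_maximalIdeal_mul ha h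
  set W := (A ∙ f).annihilator
  have hmW : maximalIdeal A ≤ Ideal.span {c} ⊔ W :=
    Ideal.le_span_singleton_sup_annihilator fun t ht => by
      simpa [mul_comm] using Submodule.mem_colon.mp hf t ht
  obtain ⟨k, hk⟩ := Ideal.exists_pow_le_of_le_radical_of_fg hrad.ge (IsNoetherian.noetherian _)
  have hkW : maximalIdeal A ^ k * W = ⊥ := by
    refine eq_bot_iff.mpr ((Ideal.mul_mono_left hk).trans (Ideal.mul_le.mpr fun p hp w hw => ?_))
    obtain ⟨s, rfl⟩ := Ideal.mem_span_singleton'.mp hp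
    rw [Submodule.mem_annihilator_span_singleton, smul_eq_mul] at hw
    rw [Ideal.mem_bot, show s * (c * f) * w = s * c * (w * f) by ring, hw, mul_zero]
  exact hasHSMultiplicity_one_of_maximalIdeal_pow_eq_span hdim hc (N := k + 1) fun n hn =>
    Ideal.pow_eq_span_singleton_pow_of_le_sup hc hmW hkW hn
end
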